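/- For every finite word ω = (ω_1,…,ω_m) over the restricted alphabet I_{n>2} = {(k,n) ∈ I : n > 2} and all z, w in the closed unit disk 𝔻, |φ'_ω(z)| ≤ 4.3655·|φ'_ω(w)|, where φ_ω = φ_{ω_1}∘⋯∘φ_{ω_m}. -/

import Mathlib

open Complex Metric Set
open scoped ENNReal

noncomputable section

/-- λ = √3 -/
def lam : ℝ := Real.sqrt 3

/-- The Möbius map f(z) = ((λ−1)z+1)/(−z+λ+1). -/
def apolF : ℂ → ℂ := fun z => (((lam : ℂ) - 1) * z + 1) / (-z + (lam : ℂ) + 1)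

/-- Rotation by angle θ. -/
def Rot (θ : ℝ) : ℂ → ℂ := fun z => Complex.exp ((θ : ℂ) * Complex.I) * z

/-- θ_k = (−1)^k · 2π/3 -/
def thetaA (k : ℕ) : ℝ := (-1 : ℝ) ^ k * (2 * Real.pi / 3)

/-- θ'_k = 2πk/3 -/
def thetaB (k : ℕ) : ℝ := 2 * Real.pi * k / 3

/-- The Apollonian generators φ_{k,n} = R_{θ'_k} ∘ f^n ∘ R_{θ_k} ∘ f. -/
def phi (k n : ℕ) : ℂ → ℂ := Rot (thetaB k) ∘ (apolF^[n]) ∘ Rot (thetaA k) ∘ apolF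

/-- The closed unit disk 𝔻. -/
def unitD : Set ℂ := Metric.closedBall (0 : ℂ) 1

/-- The Apollonian alphabet I = {1,…,6} × {1,2,3,…}. -/
def apolI : Set (ℕ × ℕ) := {p | 1 ≤ p.1 ∧ p.1 ≤ 6 ∧ 1 ≤ p.2}

/-- Composition φ_{ω₁}∘⋯∘φ_{ω_m} of a finite word ω = (ω₁,…,ω_m). -/
def wordComp (ω : List (ℕ × ℕ)) : ℂ → ℂ :=
  ω.foldr (fun p g => phi p.1 p.2 ∘ g) id

/-!
Each generator `φ_{k,n}` is a Möbius map, and for `n ≥ 3` it maps the closed disk of radius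
`R = 57/20` into `𝔻`: the Hermitian form `|cz + d|² - |az + b|²` of its matrix is positive there.
Matrix products preserve this, so every `φ_ω` is a Möbius map `z ↦ (az + b)/(cz + d)` whose
pole lies outside that disk. Its derivative `(ad - bc)/(cz + d)²` therefore varies on `𝔻` by a
factor at most `((R + 1)/(R - 1))² = (77/37)² < 4.3655`.
-/

open ComplexConjugate

namespace Matrix

section Field
variable {K : Type*} [Field K]

def mobiusNum (M : Matrix (Fin 2) (Fin 2) K) (z : K) : K := M 0 0 * z + M 0 1

def mobiusDenom (M : Matrix (Fin 2) (Fin 2) K) (z : K) : K := M 1 0 * z + M 1 1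

def mobius (M : Matrix (Fin 2) (Fin 2) K) (z : K) : K := M.mobiusNum z / M.mobiusDenom z

variable {M N : Matrix (Fin 2) (Fin 2) K} {z : K}

lemma mobiusNum_mul (h : N.mobiusDenom z ≠ 0) :
    (M * N).mobiusNum z = M.mobiusNum (N.mobius z) * N.mobiusDenom z := by
  simp only [mobiusNum, mobius, mobiusDenom, mul_apply, Fin.sum_univ_two] at h ⊢
  field_simp
  ring

lemma mobiusDenom_mul (h : N.mobiusDenom z ≠ 0) :
    (M * N).mobiusDenom z = M.mobiusDenom (N.mobius z) * N.mobiusDenom z := by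
  simp only [mobiusNum, mobius, mobiusDenom, mul_apply, Fin.sum_univ_two] at h ⊢
  field_simp
  ring

lemma mobius_mul (h : N.mobiusDenom z ≠ 0) : (M * N).mobius z = M.mobius (N.mobius z) := by
  rw [mobius, mobiusNum_mul h, mobiusDenom_mul h, mul_div_mul_right _ _ h]
  rfl

lemma mobius_smul {c : K} (hc : c ≠ 0) : (c • M).mobius = M.mobius := by
  ext z
  simp only [mobius, mobiusNum, mobiusDenom, smul_apply, smul_eq_mul]
  rw [mul_assoc, mul_assoc, ← mul_add, ← mul_add, mul_div_mul_left _ _ hc]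

lemma mobius_diagonal (a : K) : (!![a, 0; 0, 1]).mobius z = a * z := by
  simp [mobius, mobiusNum, mobiusDenom]

lemma mobius_diagonal_mul (a : K) (M : Matrix (Fin 2) (Fin 2) K) (z : K) :
    (!![a, 0; 0, 1] * M).mobius z = a * M.mobius z := by
  simp [mobius, mobiusNum, mobiusDenom, mul_apply, Fin.sum_univ_two, mul_assoc, ← mul_add,
    mul_div_assoc]

end Field

def MapsClosedBallToUnitDisk (R : ℝ) (M : Matrix (Fin 2) (Fin 2) ℂ) : Prop :=
  ∀ z ∈ closedBall (0 : ℂ) R, M.mobiusDenom z ≠ 0 ∧ M.mobius z ∈ closedBall (0 : ℂ) 1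

lemma MapsClosedBallToUnitDisk.mul {R : ℝ} {M N : Matrix (Fin 2) (Fin 2) ℂ} (hR : 1 ≤ R)
    (hM : M.MapsClosedBallToUnitDisk R) (hN : N.MapsClosedBallToUnitDisk R) :
    (M * N).MapsClosedBallToUnitDisk R := by
  intro z hz
  obtain ⟨hNz, hNdisk⟩ := hN z hz
  obtain ⟨hMz, hMdisk⟩ := hM _ (closedBall_subset_closedBall hR hNdisk)
  exact ⟨by rw [mobiusDenom_mul hNz]; exact mul_ne_zero hMz hNz, by rwa [mobius_mul hNz]⟩

lemma mapsClosedBallToUnitDisk_of_normSq_lt {R : ℝ} {M : Matrix (Fin 2) (Fin 2) ℂ}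
    (h : ∀ z ∈ closedBall (0 : ℂ) R, normSq (M.mobiusNum z) < normSq (M.mobiusDenom z)) :
    M.MapsClosedBallToUnitDisk R := by
  intro z hz
  have hlt := h z hz
  have hden : M.mobiusDenom z ≠ 0 := fun h0 => by
    simp only [h0, map_zero] at hlt
    exact (normSq_nonneg _).not_gt hlt
  refine ⟨hden, ?_⟩
  rw [mem_closedBall_zero_iff, mobius, norm_div, div_le_one (norm_pos_iff.mpr hden)]
  rw [← sq_le_sq₀ (norm_nonneg _) (norm_nonneg _), Complex.sq_norm, Complex.sq_norm]
  exact hlt.le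

lemma mapsClosedBallToUnitDisk_diagonal_mul {R : ℝ} {a : ℂ} (ha : ‖a‖ = 1)
    {M : Matrix (Fin 2) (Fin 2) ℂ} (hM : M.MapsClosedBallToUnitDisk R) :
    (!![a, 0; 0, 1] * M).MapsClosedBallToUnitDisk R := by
  intro z hz
  obtain ⟨hden, hdisk⟩ := hM z hz
  have hden' : (!![a, 0; 0, 1] * M).mobiusDenom z = M.mobiusDenom z := by
    simp [mobiusDenom, mul_apply, Fin.sum_univ_two]
  refine ⟨hden' ▸ hden, ?_⟩
  rwa [mem_closedBall_zero_iff, mobius_diagonal_mul, norm_mul, ha, one_mul,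
    ← mem_closedBall_zero_iff]

lemma mul_norm_lt_norm_of_forall_ne_zero {R : ℝ} {c d : ℂ} (hR : 0 ≤ R)
    (h : ∀ z ∈ closedBall (0 : ℂ) R, c * z + d ≠ 0) : R * ‖c‖ < ‖d‖ := by
  by_contra! hle
  have hc : c ≠ 0 := by
    rintro rfl
    exact h 0 (mem_closedBall_self hR) (by simpa using hle)
  refine h (-d / c) ?_ (by field_simp; ring)
  rw [mem_closedBall_zero_iff, norm_div, norm_neg, div_le_iff₀ (norm_pos_iff.mpr hc)]
  exact hle

lemma sub_mul_norm_le_add_mul_norm {R r : ℝ} {c d z w : ℂ} (hcd : R * ‖c‖ ≤ ‖d‖) (hr : 0 ≤ r)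
    (hrR : r ≤ R) (hz : ‖z‖ ≤ r) (hw : ‖w‖ ≤ r) :
    (R - r) * ‖c * w + d‖ ≤ (R + r) * ‖c * z + d‖ := by
  have hup : ‖c * w + d‖ ≤ ‖c‖ * r + ‖d‖ := by
    calc ‖c * w + d‖ ≤ ‖c‖ * ‖w‖ + ‖d‖ := by grw [norm_add_le, norm_mul]
      _ ≤ ‖c‖ * r + ‖d‖ := by gcongr
  have hlow : ‖d‖ - ‖c‖ * r ≤ ‖c * z + d‖ := by
    calc ‖d‖ - ‖c‖ * r ≤ ‖d‖ - ‖c * z‖ := by rw [norm_mul]; gcongr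
      _ ≤ ‖c * z + d‖ := by rw [add_comm]; exact norm_sub_le_norm_add _ _
  calc (R - r) * ‖c * w + d‖ ≤ (R - r) * (‖c‖ * r + ‖d‖) := by gcongr
    _ ≤ (R + r) * (‖d‖ - ‖c‖ * r) := by nlinarith [norm_nonneg c]
    _ ≤ (R + r) * ‖c * z + d‖ := by gcongr; linarith

lemma hasDerivAt_mobius {𝕜 : Type*} [NontriviallyNormedField 𝕜] {M : Matrix (Fin 2) (Fin 2) 𝕜}
    {z : 𝕜} (h : M.mobiusDenom z ≠ 0) :
    HasDerivAt M.mobius (M.det / M.mobiusDenom z ^ 2) z := by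
  have hnum : HasDerivAt M.mobiusNum (M 0 0 * 1) z :=
    ((hasDerivAt_id z).const_mul (M 0 0)).add_const (M 0 1)
  have hden : HasDerivAt M.mobiusDenom (M 1 0 * 1) z :=
    ((hasDerivAt_id z).const_mul (M 1 0)).add_const (M 1 1)
  refine (hnum.div hden h).congr_deriv ?_
  rw [det_fin_two, mobiusNum, mobiusDenom]
  ring

lemma norm_deriv_mobius_le {R r : ℝ} {M : Matrix (Fin 2) (Fin 2) ℂ}
    (hM : ∀ z ∈ closedBall (0 : ℂ) R, M.mobiusDenom z ≠ 0) (hr : 0 ≤ r) (hrR : r < R) {z w : ℂ}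
    (hz : z ∈ closedBall (0 : ℂ) r) (hw : w ∈ closedBall (0 : ℂ) r) :
    ‖deriv M.mobius z‖ ≤ ((R + r) / (R - r)) ^ 2 * ‖deriv M.mobius w‖ := by
  have hzR := hM z (closedBall_subset_closedBall hrR.le hz)
  have hwR := hM w (closedBall_subset_closedBall hrR.le hw)
  have hdist : (R - r) * ‖M.mobiusDenom w‖ ≤ (R + r) * ‖M.mobiusDenom z‖ :=
    sub_mul_norm_le_add_mul_norm (mul_norm_lt_norm_of_forall_ne_zero (hr.trans hrR.le) hM).le
      hr hrR.le (mem_closedBall_zero_iff.mp hz) (mem_closedBall_zero_iff.mp hw)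
  rw [(hasDerivAt_mobius hzR).deriv, (hasDerivAt_mobius hwR).deriv, norm_div, norm_div, norm_pow,
    norm_pow]
  have hzpos : 0 < ‖M.mobiusDenom z‖ := norm_pos_iff.mpr hzR
  have hwpos : 0 < ‖M.mobiusDenom w‖ := norm_pos_iff.mpr hwR
  have hratio : ‖M.mobiusDenom w‖ / ‖M.mobiusDenom z‖ ≤ (R + r) / (R - r) := by
    rw [div_le_div_iff₀ hzpos (by linarith)]
    linarith [hdist]
  calc ‖M.det‖ / ‖M.mobiusDenom z‖ ^ 2
      = (‖M.mobiusDenom w‖ / ‖M.mobiusDenom z‖) ^ 2 * (‖M.det‖ / ‖M.mobiusDenom w‖ ^ 2) := by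
        field_simp
    _ ≤ ((R + r) / (R - r)) ^ 2 * (‖M.det‖ / ‖M.mobiusDenom w‖ ^ 2) := by gcongr

end Matrix

lemma normSq_sub_normSq_ge (a b c d z : ℂ) {t : ℝ} (ht : 0 < t) :
    (normSq c - normSq a - t) * normSq z + (normSq d - normSq b)
        - normSq (c * conj d - a * conj b) / t
      ≤ normSq (c * z + d) - normSq (a * z + b) := by
  set β := c * conj d - a * conj b
  have hform : normSq (c * z + d) - normSq (a * z + b)
      = (normSq c - normSq a) * normSq z + 2 * (z * β).re + (normSq d - normSq b) := by
    simp only [β, normSq_apply, mul_re, mul_im, add_re, add_im, sub_re, sub_im, conj_re, conj_im]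
    ring
  have hsq : normSq (t * conj z + β) = t * (t * normSq z + 2 * (z * β).re) + normSq β := by
    simp only [normSq_apply, mul_re, mul_im, add_re, add_im, conj_re, conj_im, ofReal_re, ofReal_im]
    ring
  have hcross : -(t * normSq z + 2 * (z * β).re) ≤ normSq β / t := by
    rw [le_div_iff₀ ht]
    linarith [hsq ▸ normSq_nonneg (t * conj z + β)]
  rw [hform]
  linarith

lemma re_mul_lt_one {E u : ℂ} (hE : ‖E‖ = 1) (hre : E.re = -1 / 2) (hu : ‖u - 1 / 2‖ < 5 / 4) :
    (E * u).re < 1 := by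
  have hsplit : E * u = E / 2 + E * (u - 1 / 2) := by ring
  have hle : (E * (u - 1 / 2)).re ≤ ‖u - 1 / 2‖ := by
    simpa only [norm_mul, hE, one_mul] using re_le_norm (E * (u - 1 / 2))
  rw [hsplit, add_re, div_ofNat_re, hre]
  linarith

lemma lam_sq : lam ^ 2 = 3 := Real.sq_sqrt (by norm_num)

lemma lam_pos : 0 < lam := Real.sqrt_pos.mpr (by norm_num)

lemma lam_gt_d3 : (1.732 : ℝ) < lam := by
  nlinarith [lam_sq, lam_pos]

lemma lam_lt_d4 : lam < 1.7321 := by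
  nlinarith [lam_sq, lam_pos]

lemma re_exp_thetaA_mul_I (k : ℕ) : (exp (thetaA k * I)).re = -1 / 2 := by
  have hcos : Real.cos (2 * Real.pi / 3) = -1 / 2 := by
    rw [show 2 * Real.pi / 3 = Real.pi - Real.pi / 3 by ring, Real.cos_pi_sub,
      Real.cos_pi_div_three]
    norm_num
  rw [exp_ofReal_mul_I_re]
  rcases Nat.even_or_odd k with hk | hk <;> simp [thetaA, hk.neg_one_pow, hcos]

def apolMatrix : Matrix (Fin 2) (Fin 2) ℂ := !![(lam : ℂ) - 1, 1; -1, (lam : ℂ) + 1]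

/-- `apolMatrix = lam • 1 + N` with `N ^ 2 = 0`, hence
`apolMatrix ^ n = lam ^ (n - 1) • apolIterMatrix n`. -/
def apolIterMatrix (n : ℕ) : Matrix (Fin 2) (Fin 2) ℂ :=
  !![(lam : ℂ) - n, n; -n, (lam : ℂ) + n]

def apolCoreMatrix (E : ℂ) (n : ℕ) : Matrix (Fin 2) (Fin 2) ℂ :=
  apolIterMatrix n * !![E, 0; 0, 1] * apolMatrix

def phiMatrix (k n : ℕ) : Matrix (Fin 2) (Fin 2) ℂ :=
  !![exp (thetaB k * I), 0; 0, 1] * apolCoreMatrix (exp (thetaA k * I)) n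

lemma apolF_eq_mobius : apolF = apolMatrix.mobius := by
  ext z
  simp only [apolF, Matrix.mobius, Matrix.mobiusNum, Matrix.mobiusDenom, apolMatrix,
    Matrix.of_apply, Matrix.cons_val', Matrix.cons_val_zero, Matrix.cons_val_one,
    Matrix.cons_val_fin_one]
  ring

lemma apolMatrix_mul_apolIterMatrix (n : ℕ) :
    apolMatrix * apolIterMatrix n = (lam : ℂ) • apolIterMatrix (n + 1) := by
  ext i j
  fin_cases i <;> fin_cases j <;>
    simp [apolMatrix, apolIterMatrix, Matrix.mul_apply, Fin.sum_univ_two] <;> ring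

lemma apolIterMatrix_mobiusDenom_ne_zero (n : ℕ) {w : ℂ} (hw : w.re < 1) :
    (apolIterMatrix n).mobiusDenom w ≠ 0 := by
  intro h
  have hre := congrArg re h
  simp only [Matrix.mobiusDenom, apolIterMatrix, Matrix.of_apply, Matrix.cons_val',
    Matrix.cons_val_zero, Matrix.cons_val_one, Matrix.cons_val_fin_one, neg_mul, add_re, neg_re,
    mul_re, natCast_re, natCast_im, ofReal_re, zero_re, zero_mul, sub_zero] at hre
  nlinarith [lam_pos, (Nat.cast_nonneg n : (0 : ℝ) ≤ n)]

lemma apolF_iterate_eq_mobius (n : ℕ) {w : ℂ} (hw : w.re < 1) :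
    apolF^[n] w = (apolIterMatrix n).mobius w := by
  induction n with
  | zero =>
    have hl : (lam : ℂ) ≠ 0 := ofReal_ne_zero.mpr lam_pos.ne'
    simp [Matrix.mobius, Matrix.mobiusNum, Matrix.mobiusDenom, apolIterMatrix, hl]
  | succ n ih =>
    rw [Function.iterate_succ_apply', ih, apolF_eq_mobius,
      ← Matrix.mobius_mul (apolIterMatrix_mobiusDenom_ne_zero n hw),
      apolMatrix_mul_apolIterMatrix, Matrix.mobius_smul (ofReal_ne_zero.mpr lam_pos.ne')]

lemma norm_apolF_sub_half_lt {z : ℂ} (hz : ‖z‖ < 21 / 20) : ‖apolF z - 1 / 2‖ < 5 / 4 := by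
  have hl1 := lam_gt_d3
  have hl2 := lam_lt_d4
  have hden : lam + 1 - ‖z‖ ≤ ‖-z + lam + 1‖ := by
    have := norm_sub_norm_le ((lam : ℂ) + 1) z
    rw [show ((lam : ℂ) + 1) - z = -z + lam + 1 by ring] at this
    have h1 : ‖(lam : ℂ) + 1‖ = lam + 1 := by
      rw [← ofReal_one, ← ofReal_add, norm_real, Real.norm_of_nonneg (by linarith)]
    linarith
  have hpos : 0 < ‖-z + lam + 1‖ := by linarith
  have hsub : apolF z - 1 / 2
      = (((lam - 1 / 2 : ℝ) : ℂ) * z + ((1 - lam) / 2 : ℝ)) / (-z + lam + 1) := by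
    rw [apolF, div_sub' (norm_pos_iff.mp hpos)]
    push_cast
    ring
  have hnum : ‖((lam - 1 / 2 : ℝ) : ℂ) * z + ((1 - lam) / 2 : ℝ)‖
      ≤ (lam - 1 / 2) * ‖z‖ + (lam - 1) / 2 := by
    calc _ ≤ ‖((lam - 1 / 2 : ℝ) : ℂ) * z‖ + ‖(((1 - lam) / 2 : ℝ) : ℂ)‖ := norm_add_le _ _
      _ = _ := by
        rw [norm_mul, norm_real, norm_real, Real.norm_of_nonneg (by linarith),
          Real.norm_of_nonpos (by linarith)]
        ring
  rw [hsub, norm_div, div_lt_iff₀ hpos]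
  nlinarith [norm_nonneg z]

lemma phi_eqOn_mobius (k n : ℕ) : EqOn (phi k n) (phiMatrix k n).mobius (ball 0 (21 / 20)) := by
  intro z hz
  rw [mem_ball_zero_iff] at hz
  have hF : apolMatrix.mobiusDenom z ≠ 0 := by
    intro h
    have hre := congrArg re h
    simp only [Matrix.mobiusDenom, apolMatrix, Matrix.of_apply, Matrix.cons_val',
      Matrix.cons_val_zero, Matrix.cons_val_one, Matrix.cons_val_fin_one, neg_mul, one_mul, add_re,
      neg_re, ofReal_re, one_re, zero_re] at hre
    have h1 := Complex.re_le_norm z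
    have h2 := lam_gt_d3
    linarith
  have hrot : (!![exp (thetaA k * I), 0; 0, 1]).mobiusDenom (apolMatrix.mobius z) ≠ 0 := by
    simp [Matrix.mobiusDenom]
  have hw : (exp (thetaA k * I) * apolF z).re < 1 :=
    re_mul_lt_one (norm_exp_ofReal_mul_I _) (re_exp_thetaA_mul_I k) (norm_apolF_sub_half_lt hz)
  simp only [phi, Function.comp_apply, Rot]
  rw [apolF_iterate_eq_mobius n hw, phiMatrix, Matrix.mobius_diagonal_mul, apolCoreMatrix,
    Matrix.mobius_mul hF, Matrix.mobius_mul hrot, Matrix.mobius_diagonal, apolF_eq_mobius]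

/-- Only `E.re` and `E.im ^ 2` enter, so both rotation angles `θ_k = ±2π/3` are covered. -/
lemma normSq_apolCoreMatrix_entries {E : ℂ} (hre : E.re = -1 / 2) (him : E.im ^ 2 = 3 / 4)
    (n : ℕ) :
    let H := apolCoreMatrix E n
    normSq (H 1 0) - normSq (H 0 0) = 3 * (2 * lam - 3) * (2 * n + 1) ∧
    normSq (H 1 1) - normSq (H 0 1) = 3 * (2 * lam + 3) * (2 * n + 1) ∧
    normSq (H 1 0 * conj (H 1 1) - H 0 0 * conj (H 0 1)) = 27 * (2 * n + 1) ^ 2 + 81 := by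
  have hl := lam_sq
  simp only [apolCoreMatrix, apolIterMatrix, apolMatrix, Matrix.mul_apply, Fin.sum_univ_two,
    Matrix.of_apply, Matrix.cons_val', Matrix.cons_val_zero, Matrix.cons_val_one,
    Matrix.empty_val', Matrix.cons_val_fin_one, normSq_apply, mul_re, mul_im, sub_re, sub_im,
    add_re, add_im, neg_re, neg_im, conj_re, conj_im, ofReal_re, ofReal_im, natCast_re, natCast_im,
    one_re, one_im, zero_re, zero_im, hre]
  refine ⟨?_, ?_, ?_⟩ <;> grind

lemma apolCoreMatrix_mapsClosedBallToUnitDisk {E : ℂ} (hE : ‖E‖ = 1) (hre : E.re = -1 / 2)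
    {n : ℕ} (hn : 3 ≤ n) : (apolCoreMatrix E n).MapsClosedBallToUnitDisk (57 / 20) := by
  have him : E.im ^ 2 = 3 / 4 := by
    have h := congrArg (· ^ 2) hE
    simp only [← normSq_eq_norm_sq, normSq_apply, one_pow, hre] at h
    linarith
  obtain ⟨hα, hδ, hβ⟩ := normSq_apolCoreMatrix_entries hre him n
  apply Matrix.mapsClosedBallToUnitDisk_of_normSq_lt
  intro z hz
  set H := apolCoreMatrix E n
  have hm : (7 : ℝ) ≤ 2 * n + 1 := by
    have : (3 : ℝ) ≤ n := by exact_mod_cast hn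
    linarith
  have hz2 : normSq z ≤ (57 / 20) ^ 2 := by
    rw [normSq_eq_norm_sq]
    exact pow_le_pow_left₀ (norm_nonneg _) (mem_closedBall_zero_iff.mp hz) 2
  -- `t ≈ |β| / R` makes the bound nearly sharp on `‖z‖ = R`; it stays positive as long as
  -- `2 * (2n + 1) ^ 2 > 81`, which is where `n ≥ 3` is needed.
  have key := normSq_sub_normSq_ge (H 0 0) (H 0 1) (H 1 0) (H 1 1) z
    (t := 19 / 10 * (2 * n + 1)) (by positivity)
  rw [hα, hδ, hβ] at key
  have hl := lam_gt_d3
  have hl2 := lam_lt_d4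
  set m : ℝ := 2 * n + 1
  set s := normSq z
  have hbracket : 29 ≤ 19 / 10 * ((6 * lam - 109 / 10) * s + 6 * lam + 9) := by
    nlinarith [mul_nonneg (by linarith : 0 ≤ 109 / 10 - 6 * lam)
      (by linarith : 0 ≤ (57 / 20) ^ 2 - s)]
  have hpos : (27 * m ^ 2 + 81) / (19 / 10 * m)
      < (3 * (2 * lam - 3) * m - 19 / 10 * m) * s + 3 * (2 * lam + 3) * m := by
    rw [div_lt_iff₀ (by positivity)]
    nlinarith [mul_le_mul_of_nonneg_left hbracket (sq_nonneg m)]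
  show normSq (H 0 0 * z + H 0 1) < normSq (H 1 0 * z + H 1 1)
  linarith

lemma phiMatrix_mapsClosedBallToUnitDisk (k : ℕ) {n : ℕ} (hn : 3 ≤ n) :
    (phiMatrix k n).MapsClosedBallToUnitDisk (57 / 20) :=
  Matrix.mapsClosedBallToUnitDisk_diagonal_mul (norm_exp_ofReal_mul_I _)
    (apolCoreMatrix_mapsClosedBallToUnitDisk (norm_exp_ofReal_mul_I _) (re_exp_thetaA_mul_I k) hn)

lemma exists_mobius_eqOn_wordComp (p : ℕ × ℕ) (ω : List (ℕ × ℕ)) (hω : ∀ q ∈ p :: ω, 3 ≤ q.2) :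
    ∃ M : Matrix (Fin 2) (Fin 2) ℂ, M.MapsClosedBallToUnitDisk (57 / 20) ∧
      EqOn (wordComp (p :: ω)) M.mobius (ball 0 (21 / 20)) := by
  induction ω generalizing p with
  | nil => exact ⟨_, phiMatrix_mapsClosedBallToUnitDisk p.1 (hω p (by simp)),
      phi_eqOn_mobius p.1 p.2⟩
  | cons q ω ih =>
    obtain ⟨N, hN, hNeq⟩ := ih q fun r hr => hω r (List.mem_cons_of_mem p hr)
    refine ⟨phiMatrix p.1 p.2 * N,
      (phiMatrix_mapsClosedBallToUnitDisk p.1 (hω p (by simp))).mul (by norm_num) hN, ?_⟩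
    intro z hz
    obtain ⟨hden, hdisk⟩ := hN z (ball_subset_closedBall.trans (closedBall_subset_closedBall
      (by norm_num)) hz)
    have hdisk' : N.mobius z ∈ ball (0 : ℂ) (21 / 20) :=
      closedBall_subset_ball (by norm_num) hdisk
    show phi p.1 p.2 (wordComp (q :: ω) z) = _
    rw [hNeq hz, phi_eqOn_mobius p.1 p.2 hdisk', Matrix.mobius_mul hden]

/-- For every finite word ω over I restricted to n > 2 and z, w ∈ 𝔻,
|φ'_ω(z)| ≤ 4.3655 · |φ'_ω(w)|. -/
theorem apollonian_distortion_bound_n_gt_two (ω : List (ℕ × ℕ))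
    (hω : ∀ p ∈ ω, p ∈ apolI ∧ 2 < p.2)
    (z w : ℂ) (hz : z ∈ unitD) (hw : w ∈ unitD) :
    ‖deriv (wordComp ω) z‖ ≤ 4.3655 * ‖deriv (wordComp ω) w‖ := by
  rcases ω with _ | ⟨p, ω⟩
  · simp only [wordComp, List.foldr_nil, deriv_id', norm_one, mul_one]
    norm_num
  obtain ⟨M, hM, hMeq⟩ := exists_mobius_eqOn_wordComp p ω fun q hq => (hω q hq).2
  have hderiv : ∀ u ∈ unitD, deriv (wordComp (p :: ω)) u = deriv M.mobius u := fun u hu =>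
    (hMeq.eventuallyEq_of_mem (isOpen_ball.mem_nhds
      (closedBall_subset_ball (by norm_num) hu))).deriv_eq
  rw [hderiv z hz, hderiv w hw]
  calc ‖deriv M.mobius z‖ ≤ ((57 / 20 + 1) / (57 / 20 - 1)) ^ 2 * ‖deriv M.mobius w‖ :=
        Matrix.norm_deriv_mobius_le (fun u hu => (hM u hu).1) zero_le_one (by norm_num) hz hw
    _ ≤ 4.3655 * ‖deriv M.mobius w‖ := by gcongr; norm_num

end
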